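/- arXiv:2604.17526 — 2 statements merged into one kernel-verified Lean document; each statement's English description precedes it below -/
import Mathlib

section
/- Fix ε ∈ (0,1) and K ≥ ⌈d/ε⌉. Define ε_k = εK / ((k−1)(1−ε) + εK) for k = 1,...,K+1 (so that the 1/ε_k are linearly spaced from 1 to 1/ε). Then there is an absolute constant C (independent of d, ε, K) such that Σ_{k=1}^K χ²(N(0, ε_{k+1} I_d); N(0, ε_k I_d)) ≤ C, and consequently Π_{k=1}^K (1 + χ²(π_{k+1}; π_k)) ≤ e^C. -/
/-!
Write `λ_k = 1/ε_k = 1 + (k - 1) h` with `h = (1 - ε)/(εK)`; the hypothesis `K ≥ d/ε` says `d h ≤ 1`.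
The Gaussian integral gives `χ²(N(0, α⁻¹ I_d); N(0, β⁻¹ I_d)) = (1 + y)^{d/2} - 1` with
`y = (α - β)² / (β (2α - β))`, and `(1 + y)^t - 1 ≤ 2 t y` once `t y ≤ 1`. For consecutive precisions
this bounds the `k`-th term by `d h (λ_k⁻¹ - λ_{k+1}⁻¹)`, so the sum telescopes to at most `d h ≤ 1`;
the product is then at most `exp` of the sum.
-/

open MeasureTheory

/-- The density of the centered Gaussian `N(0, ε I_d)` on `ℝ^d`. -/
noncomputable def gaussDensity (d : ℕ) (ε : ℝ) (x : EuclideanSpace ℝ (Fin d)) : ℝ :=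
  (2 * Real.pi * ε) ^ (-(d : ℝ) / 2) * Real.exp (-‖x‖ ^ 2 / (2 * ε))

/-- `χ²(N(0, a I_d); N(0, b I_d))`, with `χ²(p; q) = ∫ p²/q − 1`. -/
noncomputable def chiSqGauss (d : ℕ) (a b : ℝ) : ℝ :=
  (∫ x : EuclideanSpace ℝ (Fin d), (gaussDensity d a x) ^ 2 / gaussDensity d b x) - 1

open Real

lemma one_add_rpow_sub_one_le {y t : ℝ} (hy : 0 ≤ y) (ht : 0 ≤ t) (hty : t * y ≤ 1) :
    (1 + y) ^ t - 1 ≤ 2 * (t * y) := by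
  have hpow : (1 + y) ^ t ≤ exp (t * y) := by
    rw [rpow_def_of_pos (by positivity), mul_comm t]
    gcongr
    linarith [log_le_sub_one_of_pos (show 0 < 1 + y by positivity)]
  have hty' : |t * y| ≤ 1 := by rwa [abs_of_nonneg (by positivity)]
  have hexp := (le_abs_self _).trans (abs_exp_sub_one_le hty')
  rw [abs_of_nonneg (by positivity)] at hexp
  linarith

lemma Real.prod_one_add_le_exp_sum_of_nonneg_on {ι : Type*} (s : Finset ι) {f : ι → ℝ}
    (hf : ∀ i ∈ s, 0 ≤ f i) : ∏ i ∈ s, (1 + f i) ≤ exp (∑ i ∈ s, f i) := by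
  rw [exp_sum]
  exact Finset.prod_le_prod (fun i hi ↦ by linarith [hf i hi])
    fun i _ ↦ (add_comm 1 (f i)).le.trans (add_one_le_exp _)

lemma div_mul_add_eq_inv_one_add {m : ℝ} (hm : m ≠ 0) (x c : ℝ) :
    m / (x * c + m) = (1 + x * (c / m))⁻¹ := by
  rw [← inv_div, add_div, div_self hm, add_comm, mul_div_assoc]

lemma sum_Icc_inv_one_add_mul_sub (K : ℕ) (h : ℝ) :
    ∑ k ∈ Finset.Icc 1 K, ((1 + ((k : ℝ) - 1) * h)⁻¹ - (1 + k * h)⁻¹) = 1 - (1 + K * h)⁻¹ := by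
  induction K with
  | zero => simp
  | succ K ih =>
    rw [Finset.sum_Icc_succ_top (by omega), ih]
    push_cast
    ring

lemma gaussDensity_sq_div (d : ℕ) {a b : ℝ} (ha : 0 < a) (hb : 0 < b)
    (x : EuclideanSpace ℝ (Fin d)) :
    gaussDensity d a x ^ 2 / gaussDensity d b x =
      (b / (2 * π * a ^ 2)) ^ ((d : ℝ) / 2) * exp (-((2 * b - a) / (2 * a * b)) * ‖x‖ ^ 2) := by
  have hexp : exp (-‖x‖ ^ 2 / (2 * a)) ^ 2 / exp (-‖x‖ ^ 2 / (2 * b)) =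
      exp (-((2 * b - a) / (2 * a * b)) * ‖x‖ ^ 2) := by
    rw [← exp_nat_mul, ← exp_sub]
    congr 1
    field_simp
    ring
  have hconst : ((2 * π * a) ^ (-(d : ℝ) / 2)) ^ 2 / (2 * π * b) ^ (-(d : ℝ) / 2) =
      (b / (2 * π * a ^ 2)) ^ ((d : ℝ) / 2) := by
    rw [show b / (2 * π * a ^ 2) = 2 * π * b / (2 * π * a) ^ 2 by field_simp,
      div_rpow (by positivity) (by positivity), ← rpow_pow_comm (by positivity), neg_div,
      rpow_neg (by positivity), rpow_neg (by positivity), inv_pow, inv_div_inv]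
  rw [gaussDensity, gaussDensity, mul_pow, mul_div_mul_comm, hconst, hexp]

lemma chiSqGauss_eq (d : ℕ) {a b : ℝ} (ha : 0 < a) (hab : a < 2 * b) :
    chiSqGauss d a b = (b ^ 2 / (a * (2 * b - a))) ^ ((d : ℝ) / 2) - 1 := by
  have hb : 0 < b := by linarith
  have hc : 0 < (2 * b - a) / (2 * a * b) := div_pos (by linarith) (by positivity)
  rw [chiSqGauss, integral_congr_ae (.of_forall (gaussDensity_sq_div d ha hb)), integral_const_mul,
    GaussianFourier.integral_rexp_neg_mul_sq_norm hc, finrank_euclideanSpace_fin,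
    ← mul_rpow (by positivity) (by positivity)]
  congr 2
  field_simp

lemma chiSqGauss_inv_eq (d : ℕ) {α β : ℝ} (hβ : 0 < β) (hβα : β < 2 * α) :
    chiSqGauss d α⁻¹ β⁻¹ = (1 + (α - β) ^ 2 / (β * (2 * α - β))) ^ ((d : ℝ) / 2) - 1 := by
  have hα : 0 < α := by linarith
  have hinv : α⁻¹ < 2 * β⁻¹ := by
    rw [← div_eq_mul_inv, lt_div_iff₀ hβ, ← div_eq_inv_mul, div_lt_iff₀ hα]
    exact hβα
  have hne : α * 2 - β ≠ 0 := by linarith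
  rw [chiSqGauss_eq d (inv_pos.2 hα) hinv]
  congr 2
  field_simp
  ring

lemma chiSqGauss_inv_nonneg (d : ℕ) {α β : ℝ} (hβ : 0 < β) (hβα : β < 2 * α) :
    0 ≤ chiSqGauss d α⁻¹ β⁻¹ := by
  have : 0 ≤ (α - β) ^ 2 / (β * (2 * α - β)) := div_nonneg (sq_nonneg _) (by nlinarith)
  rw [chiSqGauss_inv_eq d hβ hβα, sub_nonneg]
  exact one_le_rpow (by linarith) (by positivity)

lemma chiSqGauss_inv_le (d : ℕ) {α β : ℝ} (hβ : 0 < β) (hβα : β ≤ α)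
    (hsmall : d * (α - β) * (β⁻¹ - α⁻¹) ≤ 1) :
    chiSqGauss d α⁻¹ β⁻¹ ≤ d * (α - β) * (β⁻¹ - α⁻¹) := by
  have hα : 0 < α := hβ.trans_le hβα
  have hy_le : (α - β) ^ 2 / (β * (2 * α - β)) ≤ (α - β) * (β⁻¹ - α⁻¹) := by
    rw [show (α - β) * (β⁻¹ - α⁻¹) = (α - β) ^ 2 / (β * α) by field_simp]
    gcongr
    linarith
  have hdy : d * ((α - β) ^ 2 / (β * (2 * α - β))) ≤ d * (α - β) * (β⁻¹ - α⁻¹) := by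
    rw [mul_assoc]
    exact mul_le_mul_of_nonneg_left hy_le d.cast_nonneg
  have hy : 0 ≤ (α - β) ^ 2 / (β * (2 * α - β)) := div_nonneg (sq_nonneg _) (by nlinarith)
  rw [chiSqGauss_inv_eq d hβ (by linarith)]
  calc _ ≤ 2 * ((d : ℝ) / 2 * ((α - β) ^ 2 / (β * (2 * α - β)))) :=
        one_add_rpow_sub_one_le hy (by positivity) (by linarith)
    _ ≤ _ := by linarith

lemma sum_chiSqGauss_linear_precision_le (d K : ℕ) {h : ℝ} (h0 : 0 ≤ h) (hdh : d * h ≤ 1) :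
    ∑ k ∈ Finset.Icc 1 K, chiSqGauss d (1 + k * h)⁻¹ (1 + ((k : ℝ) - 1) * h)⁻¹ ≤ d * h := by
  have hterm : ∀ k ∈ Finset.Icc 1 K, chiSqGauss d (1 + k * h)⁻¹ (1 + ((k : ℝ) - 1) * h)⁻¹ ≤
      d * h * ((1 + ((k : ℝ) - 1) * h)⁻¹ - (1 + k * h)⁻¹) := by
    intro k hk
    have hk1 : (1 : ℝ) ≤ k := by exact_mod_cast (Finset.mem_Icc.1 hk).1
    rw [show 1 + (k : ℝ) * h = 1 + ((k : ℝ) - 1) * h + h by ring]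
    set β := 1 + ((k : ℝ) - 1) * h
    have hβ : 1 ≤ β := by nlinarith
    have hgap : β⁻¹ - (β + h)⁻¹ ≤ 1 := by
      have : 0 ≤ (β + h)⁻¹ := by positivity
      linarith [inv_le_one_of_one_le₀ hβ]
    have hgap0 : 0 ≤ β⁻¹ - (β + h)⁻¹ := sub_nonneg.2 (inv_anti₀ (by linarith) (by linarith))
    simpa only [add_sub_cancel_left] using chiSqGauss_inv_le d (α := β + h) (β := β) (by linarith)
      (by linarith) (by rw [add_sub_cancel_left]; exact mul_le_one₀ hdh hgap0 hgap)
  calc _ ≤ ∑ k ∈ Finset.Icc 1 K, d * h * ((1 + ((k : ℝ) - 1) * h)⁻¹ - (1 + k * h)⁻¹) :=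
        Finset.sum_le_sum hterm
    _ = d * h * (1 - (1 + K * h)⁻¹) := by rw [← Finset.mul_sum, sum_Icc_inv_one_add_mul_sub]
    _ ≤ d * h := mul_le_of_le_one_right (by positivity) (sub_le_self _ (by positivity))

/-- Fix `ε ∈ (0,1)` and `K ≥ ⌈d/ε⌉`, and let
`ε_k = εK / ((k−1)(1−ε) + εK)` (so the `1/ε_k` are linearly spaced from `1` to `1/ε`).
There is an absolute constant `C` (independent of `d`, `ε`, `K`) such that
`∑_{k=1}^K χ²(N(0, ε_{k+1} I_d); N(0, ε_k I_d)) ≤ C`, and consequently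
`∏_{k=1}^K (1 + χ²(π_{k+1}; π_k)) ≤ e^C`. -/
theorem gaussian_annealing_chiSq_sum_bounded :
    ∃ C : ℝ, 0 < C ∧ ∀ (d K : ℕ) (ε : ℝ), 0 < ε → ε < 1 → (d : ℝ) / ε ≤ K →
      (∑ k ∈ Finset.Icc 1 K,
          chiSqGauss d (ε * K / (((k : ℝ) + 1 - 1) * (1 - ε) + ε * K))
                       (ε * K / (((k : ℝ) - 1) * (1 - ε) + ε * K)) ≤ C) ∧
      (∏ k ∈ Finset.Icc 1 K,
          (1 + chiSqGauss d (ε * K / (((k : ℝ) + 1 - 1) * (1 - ε) + ε * K))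
                            (ε * K / (((k : ℝ) - 1) * (1 - ε) + ε * K)))
        ≤ Real.exp C) := by
  refine ⟨1, one_pos, fun d K ε hε hε1 hdK => ?_⟩
  set h := (1 - ε) / (ε * K)
  have h0 : 0 ≤ h := div_nonneg (by linarith) (by positivity)
  have hdh : d * h ≤ 1 := by
    rw [div_le_iff₀ hε] at hdK
    rw [← mul_div_assoc]
    exact div_le_one_of_le₀ (by nlinarith) (by positivity)
  have hterm : ∀ k ∈ Finset.Icc 1 K,
      chiSqGauss d (ε * K / (((k : ℝ) + 1 - 1) * (1 - ε) + ε * K))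
        (ε * K / (((k : ℝ) - 1) * (1 - ε) + ε * K)) =
      chiSqGauss d (1 + k * h)⁻¹ (1 + ((k : ℝ) - 1) * h)⁻¹ := by
    intro k hk
    have hK : ε * K ≠ 0 := mul_ne_zero hε.ne' (Nat.cast_ne_zero.2 (by grind))
    rw [div_mul_add_eq_inv_one_add hK, div_mul_add_eq_inv_one_add hK, add_sub_cancel_right]
  have hsum := (sum_chiSqGauss_linear_precision_le d K h0 hdh).trans hdh
  rw [Finset.sum_congr rfl hterm, Finset.prod_congr rfl fun k hk ↦ by rw [hterm k hk]]
  refine ⟨hsum, (Real.prod_one_add_le_exp_sum_of_nonneg_on _ fun k hk ↦ ?_).trans (exp_le_exp.2 hsum)⟩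
  have hk1 : (1 : ℝ) ≤ k := by exact_mod_cast (Finset.mem_Icc.1 hk).1
  exact chiSqGauss_inv_nonneg d (by nlinarith) (by nlinarith)
end

section
/- Let ζ̃_1,...,ζ̃_N be nonnegative i.i.d. L² random variables with mean μ̃ > 0 and variance σ̃², and set ζ_i = ζ̃_i / S_N where S_N = Σ_{j=1}^N ζ̃_j. Then E[Σ_{i=1}^N ζ_i²] ≤ 8(σ̃² + μ̃²)/(N μ̃²). -/
/-!
On the event `S_N > N μ̃ / 2` every weight satisfies `ζ_i ≤ 2 ζ̃_i / (N μ̃)`, so there the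
sum of squares is at most `4 ∑ ζ̃_i² / (N μ̃)²`, of expectation `4 (σ̃² + μ̃²) / (N μ̃²)`.
On the complementary event the weights form a probability vector, so the sum of squares is
at most `1`, and Chebyshev's inequality for `S_N` (of variance `N σ̃²`) bounds the probability
of that event by `4 σ̃² / (N μ̃²)`.
-/

open MeasureTheory ProbabilityTheory Finset

section Weights

variable {ι : Type*} (s : Finset ι) {x : ι → ℝ}

lemma sum_sq_div_sum_le_one (hx : ∀ i ∈ s, 0 ≤ x i) :
    ∑ i ∈ s, (x i / ∑ j ∈ s, x j) ^ 2 ≤ 1 := by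
  rcases (sum_nonneg hx).eq_or_lt with h0 | hpos
  · simp [← h0]
  calc ∑ i ∈ s, (x i / ∑ j ∈ s, x j) ^ 2 ≤ ∑ i ∈ s, x i / ∑ j ∈ s, x j := by
        refine sum_le_sum fun i hi => ?_
        have h0 : 0 ≤ x i / ∑ j ∈ s, x j := div_nonneg (hx i hi) hpos.le
        have h1 : x i / ∑ j ∈ s, x j ≤ 1 := (div_le_one hpos).2 (single_le_sum hx hi)
        nlinarith
    _ = 1 := by rw [← sum_div, div_self hpos.ne']

lemma sum_sq_div_sum_le_of_le_sum {c : ℝ} (hc : 0 < c) (hcx : c ≤ ∑ j ∈ s, x j) :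
    ∑ i ∈ s, (x i / ∑ j ∈ s, x j) ^ 2 ≤ (∑ i ∈ s, x i ^ 2) / c ^ 2 := by
  rw [sum_div]
  refine sum_le_sum fun i _ => ?_
  rw [div_pow]
  gcongr

end Weights

section Probability

variable {Ω : Type*} [MeasurableSpace Ω] {μ : Measure Ω}

lemma integral_le_integral_add_measureReal_compl [IsFiniteMeasure μ] {f g : Ω → ℝ}
    {A : Set Ω} (hA : NullMeasurableSet A μ) (hf : AEStronglyMeasurable f μ) (hf0 : ∀ ω, 0 ≤ f ω)
    (hf1 : ∀ ω, f ω ≤ 1) (hg : Integrable g μ) (hg0 : ∀ ω, 0 ≤ g ω)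
    (hfg : ∀ ω ∈ A, f ω ≤ g ω) :
    ∫ ω, f ω ∂μ ≤ ∫ ω, g ω ∂μ + μ.real Aᶜ := by
  have hfi : Integrable f μ := (integrable_const (1 : ℝ)).mono' hf <|
    .of_forall fun ω => by rw [Real.norm_of_nonneg (hf0 ω)]; exact hf1 ω
  rw [← integral_add_compl₀ hA hfi]
  gcongr
  · calc ∫ ω in A, f ω ∂μ ≤ ∫ ω in A, g ω ∂μ :=
          setIntegral_mono_on₀ hfi.integrableOn hg.integrableOn hA hfg
      _ ≤ ∫ ω, g ω ∂μ := setIntegral_le_integral hg (.of_forall hg0)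
  · calc ∫ ω in Aᶜ, f ω ∂μ ≤ ∫ _ in Aᶜ, (1 : ℝ) ∂μ :=
          setIntegral_mono hfi.integrableOn (integrable_const 1).integrableOn hf1
      _ = μ.real Aᶜ := by simp

lemma measureReal_le_integral_sub_le_variance_div_sq [IsFiniteMeasure μ] {X : Ω → ℝ}
    (hX : MemLp X 2 μ) {c : ℝ} (hc : 0 < c) :
    μ.real {ω | X ω ≤ μ[X] - c} ≤ variance X μ / c ^ 2 := by
  have hsub : {ω | X ω ≤ μ[X] - c} ⊆ {ω | c ≤ |X ω - μ[X]|} := fun ω hω => by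
    rw [Set.mem_ofPred_eq, abs_sub_comm]
    exact le_abs.2 (Or.inl (by linarith [hω.out]))
  exact (measureReal_mono hsub).trans
    (ENNReal.toReal_le_of_le_ofReal (by positivity [variance_nonneg X μ])
      (meas_ge_le_variance_div_sq hX hc))

variable [IsProbabilityMeasure μ] {ι : Type*} [Fintype ι] {X : ι → Ω → ℝ}
  (hX : ∀ i, MemLp (X i) 2 μ) {m v : ℝ} (hm : ∀ i, μ[X i] = m)
  (hv : ∀ i, Var[X i; μ] = v)
include hX hm hv

lemma integral_sum_sq_eq_card_mul :
    ∫ ω, ∑ i, X i ω ^ 2 ∂μ = Fintype.card ι * (v + m ^ 2) := by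
  have hsq (i : ι) : ∫ ω, X i ω ^ 2 ∂μ = v + m ^ 2 := by
    rw [← hv i, ← hm i, variance_eq_sub (hX i)]
    simp only [Pi.pow_apply]
    ring
  simp [integral_finsetSum _ fun i _ => (hX i).integrable_sq, hsq, mul_add]

lemma measureReal_sum_le_card_mul_sub_le (hindep : Pairwise fun i j => X i ⟂ᵢ[μ] X j) {c : ℝ}
    (hc : 0 < c) :
    μ.real {ω | ∑ i, X i ω ≤ Fintype.card ι * m - c} ≤ Fintype.card ι * v / c ^ 2 := by
  have hmean : μ[∑ i, X i] = Fintype.card ι * m := by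
    simp [integral_finsetSum _ fun i _ => (hX i).integrable one_le_two, hm]
  have hvar : Var[∑ i, X i; μ] = Fintype.card ι * v := by
    simp [IndepFun.variance_sum (fun i _ => hX i) fun i _ j _ hij => hindep hij, hv]
  have h := measureReal_le_integral_sub_le_variance_div_sq
    (memLp_finsetSum' univ fun i _ => hX i) hc
  rw [hmean, hvar] at h
  simpa only [Finset.sum_apply] using h

end Probability

theorem normalized_weights_sq_sum_bound_general
    {Ω : Type*} [MeasurableSpace Ω] (P : Measure Ω) [IsProbabilityMeasure P]
    (N : ℕ) (hN : 0 < N) (ζ : Fin N → Ω → ℝ)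
    (hnn : ∀ i ω, 0 ≤ ζ i ω)
    (hL2 : ∀ i, MemLp (ζ i) 2 P)
    (hindep : iIndepFun ζ P)
    (μt σ2 : ℝ) (hμpos : 0 < μt)
    (hmean : ∀ i, ∫ ω, ζ i ω ∂P = μt)
    (hvar : ∀ i, ∫ ω, (ζ i ω - μt) ^ 2 ∂P = σ2) :
    ∫ ω, ∑ i, (ζ i ω / ∑ j, ζ j ω) ^ 2 ∂P ≤ 8 * (σ2 + μt ^ 2) / (N * μt ^ 2) := by
  set c : ℝ := N * μt / 2
  have hc : 0 < c := by positivity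
  have hvari (i : Fin N) : Var[ζ i; P] = σ2 := by
    rw [variance_eq_integral (hL2 i).aemeasurable, hmean i, hvar i]
  have hζ := fun i => (hL2 i).aemeasurable
  have hsplit := integral_le_integral_add_measureReal_compl (μ := P)
    (A := {ω | c < ∑ j, ζ j ω}) (nullMeasurableSet_lt aemeasurable_const (by fun_prop))
    (AEMeasurable.aestronglyMeasurable (by fun_prop)) (fun ω => by positivity)
    (fun ω => sum_sq_div_sum_le_one _ fun i _ => hnn i ω)
    ((integrable_finsetSum _ fun i _ => (hL2 i).integrable_sq).div_const (c ^ 2))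
    (fun ω => by positivity) fun ω hω => sum_sq_div_sum_le_of_le_sum _ hc (le_of_lt hω)
  have htail : P.real {ω | c < ∑ j, ζ j ω}ᶜ ≤ N * σ2 / c ^ 2 := by
    have hc' : N * μt - c = c := by ring
    simpa [Set.compl_ofPred, hc'] using measureReal_sum_le_card_mul_sub_le hL2 hmean hvari
      (fun i j hij => hindep.indepFun hij) hc
  rw [integral_div, integral_sum_sq_eq_card_mul hL2 hmean hvari, Fintype.card_fin] at hsplit
  calc _ ≤ N * (σ2 + μt ^ 2) / c ^ 2 + N * σ2 / c ^ 2 := by linarith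
    _ = 4 * (2 * σ2 + μt ^ 2) / (N * μt ^ 2) := by field_simp; ring
    _ ≤ 8 * (σ2 + μt ^ 2) / (N * μt ^ 2) :=
      div_le_div_of_nonneg_right (by nlinarith) (by positivity)

/-- Let `ζ̃_1, …, ζ̃_N` be nonnegative i.i.d. `L²` random variables with mean
`μ̃ > 0` and variance `σ̃²`, and set `ζ_i = ζ̃_i / S_N` where `S_N = ∑_j ζ̃_j`.  Then
`E[∑_i ζ_i²] ≤ 8(σ̃² + μ̃²)/(N μ̃²)`. -/
theorem normalized_weights_sq_sum_bound
    {Ω : Type*} [MeasurableSpace Ω] (P : Measure Ω) [IsProbabilityMeasure P]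
    (N : ℕ) (hN : 0 < N) (ζ : Fin N → Ω → ℝ)
    (hmeas : ∀ i, Measurable (ζ i))
    (hnn : ∀ i ω, 0 ≤ ζ i ω)
    (hL2 : ∀ i, MemLp (ζ i) 2 P)
    (hindep : iIndepFun ζ P)
    (hident : ∀ i j, IdentDistrib (ζ i) (ζ j) P P)
    (μt σ2 : ℝ) (hμpos : 0 < μt)
    (hmean : ∀ i, ∫ ω, ζ i ω ∂P = μt)
    (hvar : ∀ i, ∫ ω, (ζ i ω - μt) ^ 2 ∂P = σ2) :
    ∫ ω, ∑ i, (ζ i ω / ∑ j, ζ j ω) ^ 2 ∂P ≤ 8 * (σ2 + μt ^ 2) / (N * μt ^ 2) :=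
  normalized_weights_sq_sum_bound_general P N hN ζ hnn hL2 hindep μt σ2 hμpos hmean hvar
end
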